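/- For α > 0 let g_α(t) = (1 + ∫₀^t min(1, s^{1−α}) ds)^{−1} for t ≥ 0 and f(x) = ∫₀^x g_α(t) dt, and write f_k = f(k) for integers k ≥ 0. Then for every α ≥ 1 there exists a constant C ≥ 1 such that for all integers k ≥ C one has C^{−1}·a_k ≤ f_k ≤ C·a_k, where a_k = log k if α = 1, a_k = k^{α−1} if 1 < α < 2, a_k = k/log k if α = 2, and a_k = k if α > 2. -/

import Mathlib

/-- `g_α(t) = (1 + ∫₀^t min(1, s^{1−α}) ds)⁻¹`. -/
noncomputable def gfun (α : ℝ) (t : ℝ) : ℝ :=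
  (1 + ∫ s in (0 : ℝ)..t, min 1 (s ^ (1 - α)))⁻¹

/-- `f(x) = ∫₀^x g_α(t) dt`. -/
noncomputable def ffun (α : ℝ) (x : ℝ) : ℝ := ∫ t in (0 : ℝ)..x, gfun α t

/-- The comparison sequence `a_k`. -/
noncomputable def aseq (α : ℝ) (k : ℕ) : ℝ :=
  if α = 1 then Real.log k
  else if α < 2 then (k : ℝ) ^ (α - 1)
  else if α = 2 then (k : ℝ) / Real.log k
  else (k : ℝ)

/-!
On `[0, 1]` the integrand `min 1 (s ^ (1 - α))` is `1`, so `g_α t = (1 + t)⁻¹` there and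
`f x = log 2 + ∫₁^x g_α`; on `[1, ∞)` it is `s ^ (1 - α)`, so `g_α t = (2 + ∫₁^t s ^ (1 - α))⁻¹`
is explicit. For `α = 1` this gives `f x = log (1 + x)`. For `1 < α < 2` the inner integral is
of order `t ^ (2 - α)`, so `g_α t ≍ t ^ (α - 2)` and `f x ≍ x ^ (α - 1)`. For `α > 2` it stays
bounded, so `g_α ≍ 1` and `f x ≍ x`. For `α = 2`, `g_α t = (2 + log t)⁻¹` lies between
`(2 + log x)⁻¹` and `1` on `[1, x]` and below `(2 + (log x) / 2)⁻¹` on `[√x, x]`, which gives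
`f x ≍ x / log x`.
-/

open MeasureTheory Set Real

def IsComparable (a f : ℕ → ℝ) : Prop :=
  ∃ C : ℝ, 1 ≤ C ∧ ∀ k : ℕ, C ≤ (k : ℝ) → C⁻¹ * a k ≤ f k ∧ f k ≤ C * a k

lemma IsComparable.of_bounds {a f : ℝ → ℝ} {c C N : ℝ} (hc : 0 < c)
    (h : ∀ x, N ≤ x → 0 ≤ a x ∧ c * a x ≤ f x ∧ f x ≤ C * a x) :
    IsComparable (fun k : ℕ => a k) (fun k : ℕ => f k) := by
  refine ⟨max (max 1 N) (max C c⁻¹), le_max_of_le_left (le_max_left _ _), fun k hk => ?_⟩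
  obtain ⟨ha, hlow, hup⟩ := h k ((le_max_right _ _).trans ((le_max_left _ _).trans hk))
  have hpos : 0 < max (max 1 N) (max C c⁻¹) :=
    one_pos.trans_le (le_max_of_le_left (le_max_left _ _))
  constructor
  · refine le_trans (mul_le_mul_of_nonneg_right ?_ ha) hlow
    exact (inv_le_comm₀ hpos hc).2 (le_max_of_le_right (le_max_right _ _))
  · exact hup.trans (mul_le_mul_of_nonneg_right (le_max_of_le_right (le_max_left _ _)) ha)

lemma mul_integral_le_integral_and_integral_le_mul {g h : ℝ → ℝ} {a b c C : ℝ}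
    (hab : a ≤ b) (hg : IntervalIntegrable g volume a b) (hh : IntervalIntegrable h volume a b)
    (hlow : ∀ t ∈ Icc a b, c * h t ≤ g t) (hup : ∀ t ∈ Icc a b, g t ≤ C * h t) :
    c * ∫ t in a..b, h t ≤ ∫ t in a..b, g t ∧
      ∫ t in a..b, g t ≤ C * ∫ t in a..b, h t := by
  rw [← intervalIntegral.integral_const_mul, ← intervalIntegral.integral_const_mul]
  exact ⟨intervalIntegral.integral_mono_on hab (hh.const_mul c) hg hlow,
    intervalIntegral.integral_mono_on hab hg (hh.const_mul C) hup⟩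

lemma mul_sub_le_integral_and_integral_le_mul_sub {g : ℝ → ℝ} {a b c C : ℝ}
    (hab : a ≤ b) (hg : IntervalIntegrable g volume a b)
    (hlow : ∀ t ∈ Icc a b, c ≤ g t) (hup : ∀ t ∈ Icc a b, g t ≤ C) :
    c * (b - a) ≤ ∫ t in a..b, g t ∧ ∫ t in a..b, g t ≤ C * (b - a) := by
  simpa using mul_integral_le_integral_and_integral_le_mul (h := fun _ => 1) hab hg
    intervalIntegrable_const (by simpa using hlow) (by simpa using hup)

lemma integral_inv_one_add {x : ℝ} (hx : 0 ≤ x) :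
    ∫ t in (0 : ℝ)..x, (1 + t)⁻¹ = log (1 + x) := by
  rw [intervalIntegral.integral_comp_add_left (fun u => u⁻¹) 1,
    integral_inv_of_pos (by norm_num) (by linarith)]
  norm_num

lemma min_half_mul_le_log_two_add {c y : ℝ} (hy : 1 ≤ y) :
    min (1 / 2) c * y ≤ log 2 + c * (y - 1) := by
  have := log_two_gt_d9
  calc min (1 / 2) c * y = min (1 / 2) c + min (1 / 2) c * (y - 1) := by ring
    _ ≤ 1 / 2 + c * (y - 1) :=
      add_le_add (min_le_left _ _) (mul_le_mul_of_nonneg_right (min_le_right _ _) (by linarith))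
    _ ≤ log 2 + c * (y - 1) := by linarith

section

variable {α : ℝ}

lemma min_one_rpow_nonneg {s : ℝ} (hs : 0 ≤ s) : 0 ≤ min 1 (s ^ (1 - α)) :=
  le_min zero_le_one (rpow_nonneg hs _)

lemma min_one_rpow_eq_one (hα : 1 ≤ α) {s : ℝ} (h0 : 0 < s) (h1 : s ≤ 1) :
    min 1 (s ^ (1 - α)) = 1 :=
  min_eq_left (one_le_rpow_of_pos_of_le_one_of_nonpos h0 h1 (by linarith))

lemma min_one_rpow_eq_rpow (hα : 1 ≤ α) {s : ℝ} (h1 : 1 ≤ s) :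
    min 1 (s ^ (1 - α)) = s ^ (1 - α) :=
  min_eq_right (rpow_le_one_of_one_le_of_nonpos h1 (by linarith))

lemma integrableOn_min_one_rpow (b : ℝ) :
    IntegrableOn (fun s => min 1 (s ^ (1 - α))) (Icc 0 b) := by
  refine Measure.integrableOn_of_bounded (M := 1) measure_Icc_lt_top.ne
    (measurable_const.min (by fun_prop)).aestronglyMeasurable ?_
  refine (ae_restrict_iff' measurableSet_Icc).2 (Filter.Eventually.of_forall fun s hs => ?_)
  rw [norm_of_nonneg (min_one_rpow_nonneg hs.1)]
  exact min_le_left _ _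

lemma intervalIntegrable_min_one_rpow {a b : ℝ} (ha : 0 ≤ a) (hab : a ≤ b) :
    IntervalIntegrable (fun s => min 1 (s ^ (1 - α))) volume a b :=
  (intervalIntegrable_iff_integrableOn_Icc_of_le hab).2
    ((integrableOn_min_one_rpow b).mono_set (Icc_subset_Icc_left ha))

lemma integral_min_one_rpow_nonneg {t : ℝ} (ht : 0 ≤ t) :
    0 ≤ ∫ s in (0 : ℝ)..t, min 1 (s ^ (1 - α)) :=
  intervalIntegral.integral_nonneg ht fun _ hs => min_one_rpow_nonneg hs.1

lemma integral_min_one_rpow_of_le_one (hα : 1 ≤ α) {t : ℝ} (h0 : 0 ≤ t) (h1 : t ≤ 1) :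
    ∫ s in (0 : ℝ)..t, min 1 (s ^ (1 - α)) = t := by
  rw [intervalIntegral.integral_congr_ae (g := fun _ => (1 : ℝ))
    (Filter.Eventually.of_forall fun s hs => ?_)]
  · simp
  · rw [uIoc_of_le h0] at hs
    exact min_one_rpow_eq_one hα hs.1 (hs.2.trans h1)

lemma integral_rpow_one_sub (hα : α ≠ 2) {t : ℝ} (ht : 1 ≤ t) :
    ∫ s in (1 : ℝ)..t, s ^ (1 - α) = (t ^ (2 - α) - 1) / (2 - α) := by
  rw [integral_rpow (Or.inr ⟨fun h => hα (by linarith), by simp [uIcc_of_le ht]⟩)]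
  norm_num [show 1 - α + 1 = 2 - α by ring]

lemma integral_rpow_neg_one {t : ℝ} (ht : 1 ≤ t) :
    ∫ s in (1 : ℝ)..t, s ^ (1 - (2 : ℝ)) = log t := by
  norm_num [rpow_neg_one, integral_inv_of_pos one_pos (by linarith : 0 < t)]

lemma continuousOn_gfun (b : ℝ) : ContinuousOn (gfun α) (Icc 0 b) := by
  rcases le_total 0 b with hb | hb
  · have hprim := intervalIntegral.continuousOn_primitive_interval (a := 0) (b := b)
      (f := fun s => min 1 (s ^ (1 - α)))
      (by rw [uIcc_of_le hb]; exact integrableOn_min_one_rpow b)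
    rw [uIcc_of_le hb] at hprim
    refine (continuousOn_const.add hprim).inv₀ fun t ht => ?_
    have := integral_min_one_rpow_nonneg (α := α) ht.1
    exact (by linarith : (0 : ℝ) < 1 + _).ne'
  · exact (subsingleton_Icc_of_ge hb).continuousOn _

lemma intervalIntegrable_gfun {a b : ℝ} (ha : 0 ≤ a) (hab : a ≤ b) :
    IntervalIntegrable (gfun α) volume a b :=
  ((continuousOn_gfun b).mono (Icc_subset_Icc_left ha)).intervalIntegrable_of_Icc hab

lemma gfun_pos {t : ℝ} (ht : 0 ≤ t) : 0 < gfun α t := by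
  have := integral_min_one_rpow_nonneg (α := α) ht
  unfold gfun
  positivity

lemma gfun_le_one {t : ℝ} (ht : 0 ≤ t) : gfun α t ≤ 1 := by
  have := integral_min_one_rpow_nonneg (α := α) ht
  exact inv_le_one_of_one_le₀ (by linarith)

lemma gfun_eq_of_le_one (hα : 1 ≤ α) {t : ℝ} (h0 : 0 ≤ t) (h1 : t ≤ 1) :
    gfun α t = (1 + t)⁻¹ := by
  rw [gfun, integral_min_one_rpow_of_le_one hα h0 h1]

lemma gfun_eq_of_one_le (hα : 1 ≤ α) {t : ℝ} (ht : 1 ≤ t) :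
    gfun α t = (2 + ∫ s in (1 : ℝ)..t, s ^ (1 - α))⁻¹ := by
  have hhigh : ∫ s in (1 : ℝ)..t, min 1 (s ^ (1 - α)) = ∫ s in (1 : ℝ)..t, s ^ (1 - α) :=
    intervalIntegral.integral_congr fun s hs =>
      min_one_rpow_eq_rpow hα (by rw [uIcc_of_le ht] at hs; exact hs.1)
  rw [gfun, ← intervalIntegral.integral_add_adjacent_intervals
    (intervalIntegrable_min_one_rpow le_rfl zero_le_one)
    (intervalIntegrable_min_one_rpow zero_le_one ht),
    integral_min_one_rpow_of_le_one hα zero_le_one le_rfl, hhigh, ← add_assoc,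
    one_add_one_eq_two]

lemma gfun_one (t : ℝ) : gfun 1 t = (1 + t)⁻¹ := by
  simp [gfun]

lemma ffun_one {x : ℝ} (hx : 0 ≤ x) : ffun 1 x = log (1 + x) := by
  simp only [ffun, gfun_one, integral_inv_one_add hx]

lemma ffun_eq_log_two_add (hα : 1 ≤ α) {x : ℝ} (hx : 1 ≤ x) :
    ffun α x = log 2 + ∫ t in (1 : ℝ)..x, gfun α t := by
  have hlow : ∫ t in (0 : ℝ)..1, gfun α t = log 2 := by
    rw [intervalIntegral.integral_congr fun t ht => gfun_eq_of_le_one hα ?_ ?_,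
      integral_inv_one_add zero_le_one, one_add_one_eq_two]
    all_goals rw [uIcc_of_le zero_le_one] at ht
    exacts [ht.1, ht.2]
  rw [ffun, ← intervalIntegral.integral_add_adjacent_intervals
    (intervalIntegrable_gfun le_rfl zero_le_one) (intervalIntegrable_gfun zero_le_one hx), hlow]

end

lemma isComparable_ffun_one :
    IsComparable (fun k : ℕ => log k) (fun k : ℕ => ffun 1 k) := by
  refine IsComparable.of_bounds (a := log) (f := ffun 1) (c := 1) (C := 2) (N := 2) one_pos
    fun x hx => ⟨log_nonneg (by linarith), ?_, ?_⟩
  · rw [one_mul, ffun_one (by linarith)]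
    exact log_le_log (by linarith) (by linarith)
  · calc ffun 1 x = log (1 + x) := ffun_one (by linarith)
      _ ≤ log (x ^ 2) := log_le_log (by linarith) (by nlinarith)
      _ = 2 * log x := by rw [log_pow]; norm_num

lemma gfun_bounds_of_lt_two {α : ℝ} (hα : 1 ≤ α) (h2 : α < 2) {t : ℝ} (ht : 1 ≤ t) :
    (2 + 1 / (2 - α))⁻¹ * t ^ (α - 2) ≤ gfun α t ∧ gfun α t ≤ t ^ (α - 2) := by
  have hβ : 0 < 2 - α := by linarith
  have hu : 1 ≤ t ^ (2 - α) := one_le_rpow ht hβ.le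
  rw [gfun_eq_of_one_le hα ht, integral_rpow_one_sub h2.ne ht,
    show α - 2 = -(2 - α) by ring, rpow_neg (by linarith)]
  set u := t ^ (2 - α)
  have hden_low : u ≤ 2 + (u - 1) / (2 - α) := by
    have : u - 1 ≤ (u - 1) / (2 - α) := by rw [le_div_iff₀ hβ]; nlinarith
    linarith
  have hden_up : 2 + (u - 1) / (2 - α) ≤ (2 + 1 / (2 - α)) * u := by
    have : (u - 1) / (2 - α) ≤ u / (2 - α) := by gcongr; linarith
    rw [add_mul, one_div_mul_eq_div]
    linarith
  rw [← mul_inv]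
  exact ⟨inv_anti₀ (by linarith) hden_up, inv_anti₀ (by linarith) hden_low⟩

lemma isComparable_ffun_of_lt_two {α : ℝ} (h1 : 1 < α) (h2 : α < 2) :
    IsComparable (fun k : ℕ => (k : ℝ) ^ (α - 1)) (fun k : ℕ => ffun α k) := by
  have hq : 0 < 2 + 1 / (2 - α) := by have := sub_pos.2 h2; positivity
  set q := 2 + 1 / (2 - α)
  have hα1 : 0 < α - 1 := by linarith
  refine IsComparable.of_bounds (a := fun x => x ^ (α - 1)) (f := ffun α)
    (c := min (1 / 2) (q⁻¹ / (α - 1))) (C := 1 + 1 / (α - 1)) (N := 1) (by positivity)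
    fun x hx => ?_
  have hP : 1 ≤ x ^ (α - 1) := one_le_rpow hx hα1.le
  have hint : ∫ t in (1 : ℝ)..x, t ^ (α - 2) = (x ^ (α - 1) - 1) / (α - 1) := by
    rw [integral_rpow (Or.inl (by linarith)), show α - 2 + 1 = α - 1 by ring, one_rpow]
  obtain ⟨hlow, hup⟩ := mul_integral_le_integral_and_integral_le_mul (C := 1) hx
    (intervalIntegrable_gfun zero_le_one hx)
    (intervalIntegral.intervalIntegrable_rpow' (by linarith))
    (fun t ht => (gfun_bounds_of_lt_two h1.le h2 ht.1).1)
    (fun t ht => by rw [one_mul]; exact (gfun_bounds_of_lt_two h1.le h2 ht.1).2)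
  rw [hint] at hlow hup
  rw [ffun_eq_log_two_add h1.le hx]
  refine ⟨by positivity, ?_, ?_⟩
  · calc _ ≤ log 2 + q⁻¹ / (α - 1) * (x ^ (α - 1) - 1) :=
          min_half_mul_le_log_two_add hP
      _ = log 2 + q⁻¹ * ((x ^ (α - 1) - 1) / (α - 1)) := by ring
      _ ≤ _ := by linarith
  · have := log_two_lt_d9
    have : (x ^ (α - 1) - 1) / (α - 1) ≤ x ^ (α - 1) / (α - 1) := by gcongr; linarith
    calc _ ≤ x ^ (α - 1) + x ^ (α - 1) / (α - 1) := by linarith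
      _ = _ := by ring

lemma gfun_two {t : ℝ} (ht : 1 ≤ t) : gfun 2 t = (2 + log t)⁻¹ := by
  rw [gfun_eq_of_one_le one_le_two ht, integral_rpow_neg_one ht]

lemma le_gfun_of_two_lt {α : ℝ} (h2 : 2 < α) {t : ℝ} (ht : 1 ≤ t) :
    (2 + 1 / (α - 2))⁻¹ ≤ gfun α t := by
  have hu : t ^ (2 - α) ≤ 1 := rpow_le_one_of_one_le_of_nonpos ht (by linarith)
  have hu0 : 0 ≤ t ^ (2 - α) := rpow_nonneg (by linarith) _
  rw [gfun_eq_of_one_le (by linarith) ht, integral_rpow_one_sub h2.ne' ht,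
    show (t ^ (2 - α) - 1) / (2 - α) = (1 - t ^ (2 - α)) / (α - 2) by
      rw [← neg_sub, ← neg_sub α, neg_div_neg_eq]]
  have : 0 ≤ (1 - t ^ (2 - α)) / (α - 2) := div_nonneg (by linarith) (by linarith)
  exact inv_anti₀ (by linarith) (by gcongr; linarith)

lemma isComparable_ffun_of_two_lt {α : ℝ} (h2 : 2 < α) :
    IsComparable (fun k : ℕ => (k : ℝ)) (fun k : ℕ => ffun α k) := by
  have hq : 0 < 2 + 1 / (α - 2) := by have := sub_pos.2 h2; positivity
  set q := 2 + 1 / (α - 2)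
  refine IsComparable.of_bounds (a := fun x => x) (f := ffun α)
    (c := min (1 / 2) q⁻¹) (C := 1) (N := 1) (by positivity)
    fun x hx => ⟨by linarith, ?_, ?_⟩
  all_goals
    obtain ⟨hlow, hup⟩ := mul_sub_le_integral_and_integral_le_mul_sub hx
      (intervalIntegrable_gfun zero_le_one hx) (fun t ht => le_gfun_of_two_lt h2 ht.1)
      (fun t ht => gfun_le_one (by linarith [ht.1]))
    rw [ffun_eq_log_two_add (by linarith) hx]
  · linarith [min_half_mul_le_log_two_add (c := q⁻¹) hx]
  · linarith [log_two_lt_d9]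

lemma le_ffun_two {x : ℝ} (hx : exp 2 ≤ x) : 1 / 4 * (x / log x) ≤ ffun 2 x := by
  have hx3 : 3 ≤ x := by linarith [add_one_le_exp 2]
  have hL : 2 ≤ log x := (le_log_iff_exp_le (by linarith)).2 hx
  obtain ⟨hlow, -⟩ := mul_sub_le_integral_and_integral_le_mul_sub
    (c := (2 + log x)⁻¹) (C := 1) (by linarith : (1 : ℝ) ≤ x)
    (intervalIntegrable_gfun zero_le_one (by linarith))
    (fun t ht => by
      rw [gfun_two ht.1]
      exact inv_anti₀ (by linarith [log_nonneg ht.1])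
        (by linarith [log_le_log (by linarith [ht.1]) ht.2]))
    (fun t ht => gfun_le_one (by linarith [ht.1]))
  rw [ffun_eq_log_two_add one_le_two (by linarith)]
  calc 1 / 4 * (x / log x) = (2 * log x)⁻¹ * (x / 2) := by field_simp; ring
    _ ≤ (2 + log x)⁻¹ * (x - 1) :=
        mul_le_mul (inv_anti₀ (by linarith) (by linarith)) (by linarith) (by linarith)
          (by positivity)
    _ ≤ _ := by linarith [log_two_gt_d9]

lemma ffun_two_le {x : ℝ} (hx : 1 < x) : ffun 2 x ≤ 4 * (x / log x) := by
  set L := log x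
  have hL : 0 < L := log_pos hx
  set r := √x
  have hrr : r * r = x := mul_self_sqrt (by linarith)
  have hr : 1 ≤ r := one_le_sqrt.2 hx.le
  have hrx : r ≤ x := by nlinarith
  have hlogr : log r = L / 2 := log_sqrt (by linarith)
  have hLr : L ≤ 2 * r := by linarith [log_le_sub_one_of_pos (by linarith : 0 < r)]
  obtain ⟨-, hhead⟩ := mul_sub_le_integral_and_integral_le_mul_sub
    (g := gfun 2) (c := 0) (C := 1) hr (intervalIntegrable_gfun zero_le_one hr)
    (fun t ht => (gfun_pos (by linarith [ht.1])).le)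
    (fun t ht => gfun_le_one (by linarith [ht.1]))
  obtain ⟨-, htail⟩ := mul_sub_le_integral_and_integral_le_mul_sub
    (c := 0) (C := (2 + L / 2)⁻¹) hrx (intervalIntegrable_gfun (by linarith) hrx)
    (fun t ht => (gfun_pos (by linarith [ht.1])).le)
    (fun t ht => by
      rw [gfun_two (hr.trans ht.1)]
      exact inv_anti₀ (by linarith) (by linarith [log_le_log (by linarith) ht.1]))
  have htail' : (2 + L / 2)⁻¹ * (x - r) ≤ 2 * (x / L) :=
    calc (2 + L / 2)⁻¹ * (x - r) ≤ (L / 2)⁻¹ * x :=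
          mul_le_mul (inv_anti₀ (by linarith) (by linarith)) (by linarith) (by linarith)
            (by positivity)
      _ = 2 * (x / L) := by field_simp
  have hr_le : r ≤ 2 * (x / L) := by
    rw [← mul_div_assoc, le_div_iff₀ hL]
    nlinarith
  rw [ffun_eq_log_two_add one_le_two hx.le, ← intervalIntegral.integral_add_adjacent_intervals
    (intervalIntegrable_gfun zero_le_one hr) (intervalIntegrable_gfun (by linarith) hrx)]
  linarith [log_two_lt_d9]

lemma isComparable_ffun_two :
    IsComparable (fun k : ℕ => (k : ℝ) / log k) (fun k : ℕ => ffun 2 k) := by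
  refine IsComparable.of_bounds (a := fun x => x / log x) (f := ffun 2) (c := 1 / 4) (C := 4)
    (N := exp 2) (by norm_num) fun x hx => ?_
  have hx1 : 1 < x := lt_of_lt_of_le (one_lt_exp_iff.2 two_pos) hx
  exact ⟨div_nonneg (by linarith) (log_pos hx1).le, le_ffun_two hx, ffun_two_le hx1⟩

/-- for every `α ≥ 1` there is `C ≥ 1` with
`C⁻¹ a_k ≤ f_k ≤ C a_k` for all integers `k ≥ C`. -/
theorem ffun_asymptotics (α : ℝ) (hα : 1 ≤ α) :
    ∃ C : ℝ, 1 ≤ C ∧ ∀ k : ℕ, C ≤ (k : ℝ) →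
      C⁻¹ * aseq α k ≤ ffun α k ∧ ffun α k ≤ C * aseq α k := by
  suffices IsComparable (fun k : ℕ => aseq α k) (fun k : ℕ => ffun α k) from this
  simp only [aseq]
  rcases hα.eq_or_lt with rfl | h1
  · simpa using isComparable_ffun_one
  rcases lt_trichotomy α 2 with h2 | rfl | h2
  · simpa [h1.ne', h2] using isComparable_ffun_of_lt_two h1 h2
  · simpa using isComparable_ffun_two
  · simpa [h1.ne', h2.ne', h2.not_gt] using isComparable_ffun_of_two_lt h2
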